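/- arXiv:1911.04707 — 2 statements merged into one kernel-verified Lean document; each statement's English description precedes it below -/
import Mathlib

section
/- Define e(p, d, n) := multichoose(C(n+1, p+1), d), which by the Lawson–Yau formula equals the Euler characteristic \chi(C_{p,d}(\mathbb{P}^n)) of the Chow variety of effective p-cycles of degree d in \mathbb{P}^n. Then for all natural numbers p, d, n, the recursion e(p+1, d, n+1) = e(p, d, n) + \sum_{i=1}^{d} e(p+1, i, n) \cdot e(p, d-i, n) holds. -/
/-!
Pascal's rule splits the `C(n+2, p+2)` elements counted by `e(p+1, d, n+1)` into
`C(n+1, p+2)` and `C(n+1, p+1)` of them, and a multiset of size `d` drawn from a disjoint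
union is a pair of multisets of sizes `i` and `d - i`. The term `i = 0` is `e(p, d, n)`.
-/

/-- `chowEuler p d n = multichoose (C(n+1, p+1), d)`, which by the Lawson–Yau formula
equals the Euler characteristic `χ(C_{p,d}(ℙⁿ))` of the Chow variety of effective
`p`-cycles of degree `d` in `ℙⁿ`. -/
def chowEuler (p d n : ℕ) : ℕ :=
  Nat.multichoose (Nat.choose (n + 1) (p + 1)) d

open Finset

theorem Nat.multichoose_add (a b d : ℕ) :
    (a + b).multichoose d = ∑ ij ∈ antidiagonal d, a.multichoose ij.1 * b.multichoose ij.2 := by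
  induction a generalizing d with
  | zero => cases d <;> simp [Nat.sum_antidiagonal_succ, Nat.multichoose_zero_succ]
  | succ a iha =>
    induction d with
    | zero => simp
    | succ d ihd =>
      rw [add_right_comm, Nat.multichoose_succ_succ, iha, add_right_comm, ihd,
        Nat.sum_antidiagonal_succ, Nat.sum_antidiagonal_succ]
      simp only [Nat.multichoose_succ_succ, Nat.multichoose_zero_right, add_mul, sum_add_distrib]
      ring

theorem Finset.sum_range_succ_eq_add_sum_Icc {M : Type*} [AddCommMonoid M] (f : ℕ → M) (d : ℕ) :
    ∑ i ∈ range (d + 1), f i = f 0 + ∑ i ∈ Icc 1 d, f i := by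
  rw [range_eq_Ico, sum_eq_sum_Ico_succ_bot d.succ_pos]
  rfl

/-- The recursion `e(p+1, d, n+1) = e(p, d, n) + ∑_{i=1}^{d} e(p+1, i, n) ⬝ e(p, d-i, n)`
satisfied by the Euler characteristics of Chow varieties. -/
theorem chowEuler_recursion (p d n : ℕ) :
    chowEuler (p + 1) d (n + 1) =
      chowEuler p d n +
        ∑ i ∈ Finset.Icc 1 d, chowEuler (p + 1) i n * chowEuler p (d - i) n := by
  have pascal : (n + 2).choose (p + 2) = (n + 1).choose (p + 2) + (n + 1).choose (p + 1) :=
    (Nat.choose_succ_succ' ..).trans (add_comm ..)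
  rw [chowEuler, pascal, Nat.multichoose_add, Nat.sum_antidiagonal_eq_sum_range_succ_mk,
    sum_range_succ_eq_add_sum_Icc]
  simp [chowEuler]
end

section
/- Let C \subset \mathbb{P}^2(\mathbb{C}) be the nodal plane cubic curve C = { [x:y:z] : z y^2 = x^3 + x^2 z } with node p_0 = [0:0:1]. There exists a group homomorphism \rho from the multiplicative group \mathbb{C}^\times to the group of self-homeomorphisms of C such that the induced map \mathbb{C}^\times \times C \to C, (t, p) \mapsto \rho(t)(p), is continuous, and the common fixed-point set \{ p \in C : \rho(t)(p) = p \text{ for all } t \in \mathbb{C}^\times \} is exactly the single point \{p_0\}. -/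
/-!
The map `σ [a : b] = [4ab(a - b) : 4ab(a + b) : (a - b)³]` from `ℙ¹` onto `C` is injective except
that it glues `[1 : 0]` and `[0 : 1]` to the node. Hence the action `t • (a, b) = (t a, b)` on
`ℂ² ∖ 0` descends along `ℂ² ∖ 0 → C`, which is a quotient map because it is already surjective on
the compact unit sphere and `C` is Hausdorff. A point `σ [a : b]` with `ab ≠ 0` is moved by `t = 2`,
since `(2a, b)` is not proportional to `(a, b)`, so the node is the only fixed point.
-/

open Projectivization
open scoped LinearAlgebra.Projectivization

/-- The quotient topology on a projectivization (Mathlib's `Projectivization` is a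
`Quotient` of the subspace of nonzero vectors). -/
noncomputable instance {K V : Type*} [DivisionRing K] [AddCommGroup V] [Module K V]
    [TopologicalSpace V] : TopologicalSpace (Projectivization K V) :=
  instTopologicalSpaceQuotient (s := projectivizationSetoid K V)

/-- The homogeneous equation `z y² = x³ + x² z` of the nodal plane cubic,
on coordinates `v = (x, y, z)`. -/
def cubicEq (v : Fin 3 → ℂ) : Prop :=
  v 2 * v 1 ^ 2 = v 0 ^ 3 + v 0 ^ 2 * v 2

lemma e2_ne_zero : (![0, 0, 1] : Fin 3 → ℂ) ≠ 0 := by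
  intro h
  simpa using congrFun h 2

/-- The nodal plane cubic `C = {[x:y:z] : z y² = x³ + x² z} ⊆ ℙ²(ℂ)`. -/
def nodalCubic : Set (ℙ ℂ (Fin 3 → ℂ)) :=
  {p | ∃ (v : Fin 3 → ℂ) (hv : v ≠ 0), p = Projectivization.mk ℂ v hv ∧ cubicEq v}

/-- The node `p₀ = [0:0:1]` of the nodal cubic. -/
noncomputable def nodalP0 : ℙ ℂ (Fin 3 → ℂ) :=
  Projectivization.mk ℂ ![0, 0, 1] e2_ne_zero

lemma nodalP0_mem : nodalP0 ∈ nodalCubic :=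
  ⟨![0, 0, 1], e2_ne_zero, rfl, by simp [cubicEq]⟩
/-- The group of self-homeomorphisms of a topological space, under composition. -/
instance homeomorphSelfGroup (X : Type*) [TopologicalSpace X] : Group (X ≃ₜ X) where
  mul f g := g.trans f
  one := Homeomorph.refl X
  inv f := f.symm
  mul_assoc _ _ _ := rfl
  one_mul f := rfl
  mul_one f := rfl
  inv_mul_cancel f := f.self_trans_symm

open Topology Function

namespace Projectivization

section OpenQuotient

variable {K V : Type*} [DivisionRing K] [AddCommGroup V] [Module K V] [TopologicalSpace V]

lemma continuous_mk' : Continuous (mk' K : {v : V // v ≠ 0} → ℙ K V) :=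
  continuous_quot_mk

lemma isOpenMap_mk' [ContinuousConstSMul K V] :
    IsOpenMap (mk' K : {v : V // v ≠ 0} → ℙ K V) := by
  intro U hU
  let scale (a : Kˣ) (w : {v : V // v ≠ 0}) : {v : V // v ≠ 0} :=
    ⟨a • w.1, (smul_ne_zero_iff_ne a).2 w.2⟩
  have hsat : mk' K ⁻¹' (mk' K '' U) = ⋃ a : Kˣ, scale a ⁻¹' U := by
    ext w
    simp only [Set.mem_preimage, Set.mem_image, Set.mem_iUnion, mk'_eq_mk, mk_eq_mk_iff]
    constructor
    · rintro ⟨u, hu, a, hau⟩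
      exact ⟨a, by convert hu; exact Subtype.ext hau⟩
    · rintro ⟨a, hu⟩
      exact ⟨_, hu, a, rfl⟩
  show IsOpen (mk' K ⁻¹' (mk' K '' U))
  rw [hsat]
  exact isOpen_iUnion fun a =>
    hU.preimage (((continuous_const_smul a).comp continuous_subtype_val).subtype_mk _)

lemma isOpenQuotientMap_mk' [ContinuousConstSMul K V] :
    IsOpenQuotientMap (mk' K : {v : V // v ≠ 0} → ℙ K V) :=
  ⟨Quotient.mk''_surjective, continuous_mk', isOpenMap_mk'⟩

end OpenQuotient

section Hausdorff

variable {K ι : Type*} [Field K]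

lemma mk_eq_mk_iff_mul_eq_mul {v w : ι → K} (hv : v ≠ 0) (hw : w ≠ 0) :
    mk K v hv = mk K w hw ↔ ∀ i j, v i * w j = v j * w i := by
  rw [mk_eq_mk_iff']
  constructor
  · rintro ⟨a, rfl⟩ i j
    simp only [Pi.smul_apply, smul_eq_mul]
    ring
  · intro h
    obtain ⟨i, hi⟩ : ∃ i, w i ≠ 0 := by
      by_contra! hc
      exact hw (funext hc)
    refine ⟨v i / w i, funext fun j => ?_⟩
    simp only [Pi.smul_apply, smul_eq_mul]
    field_simp
    linear_combination h i j

instance [TopologicalSpace K] [ContinuousMul K] [T2Space K] : T2Space (ℙ K (ι → K)) := by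
  refine (t2Space_iff_of_isOpenQuotientMap isOpenQuotientMap_mk').2 ?_
  have hrel : {q : {v : ι → K // v ≠ 0} × {v : ι → K // v ≠ 0} | mk' K q.1 = mk' K q.2} =
      ⋂ (i) (j), {q | q.1.1 i * q.2.1 j = q.1.1 j * q.2.1 i} := by
    ext q
    simp [mk_eq_mk_iff_mul_eq_mul]
  have hcoord (i : ι) : Continuous fun v : {v : ι → K // v ≠ 0} => v.1 i :=
    (continuous_apply i).comp continuous_subtype_val
  rw [hrel]
  exact isClosed_iInter fun i => isClosed_iInter fun j => isClosed_eq
    (((hcoord i).comp continuous_fst).mul ((hcoord j).comp continuous_snd))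
    (((hcoord j).comp continuous_fst).mul ((hcoord i).comp continuous_snd))

end Hausdorff

end Projectivization

section QuotientOfCompact

variable {X Y Z : Type*} [TopologicalSpace X] [TopologicalSpace Y] [TopologicalSpace Z]
  [CompactSpace Z] [T2Space Y] {π : X → Y} {s : Z → X}

lemma isQuotientMap_of_surjective_comp_compactSpace (hπ : Continuous π) (hs : Continuous s)
    (hsurj : Surjective (π ∘ s)) : IsQuotientMap π :=
  IsQuotientMap.of_comp hs hπ <|
    (hπ.comp hs).isProperMap.isClosedMap.isQuotientMap (hπ.comp hs) hsurj

lemma isQuotientMap_prodMap_of_surjective_comp_compactSpace (W : Type*) [TopologicalSpace W]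
    (hπ : Continuous π) (hs : Continuous s) (hsurj : Surjective (π ∘ s)) :
    IsQuotientMap (Prod.map (id : W → W) π) := by
  have hproper := (isProperMap_id (X := W)).prodMap (hπ.comp hs).isProperMap
  exact IsQuotientMap.of_comp (continuous_id.prodMap hs) (continuous_id.prodMap hπ) <|
    hproper.isClosedMap.isQuotientMap hproper.continuous (surjective_id.prodMap hsurj)

end QuotientOfCompact

namespace Topology.IsQuotientMap

noncomputable section

variable {G X Y : Type*} [Group G] [TopologicalSpace X] [TopologicalSpace Y] {π : X → Y}
  (hπ : IsQuotientMap π) (ρ : G →* (X ≃ₜ X))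

def descendMap (g : G) (y : Y) : Y :=
  π (ρ g (surjInv hπ.surjective y))

lemma descendMap_apply (hρ : ∀ g x x', π x = π x' → π (ρ g x) = π (ρ g x')) (g : G) (x : X) :
    hπ.descendMap ρ g (π x) = π (ρ g x) :=
  hρ g _ _ (surjInv_eq hπ.surjective _)

lemma continuous_descendMap (hρ : ∀ g x x', π x = π x' → π (ρ g x) = π (ρ g x')) (g : G) :
    Continuous (hπ.descendMap ρ g) := by
  rw [hπ.continuous_iff]
  convert hπ.continuous.comp (ρ g).continuous using 1
  exact funext (hπ.descendMap_apply ρ hρ g)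

def descendHom (hρ : ∀ g x x', π x = π x' → π (ρ g x) = π (ρ g x')) : G →* (Y ≃ₜ Y) where
  toFun g :=
    { toFun := hπ.descendMap ρ g
      invFun := hπ.descendMap ρ g⁻¹
      left_inv := hπ.surjective.forall.2 fun x => by
        simp [descendMap_apply _ _ hρ]
      right_inv := hπ.surjective.forall.2 fun x => by
        simp [descendMap_apply _ _ hρ]
      continuous_toFun := hπ.continuous_descendMap ρ hρ g
      continuous_invFun := hπ.continuous_descendMap ρ hρ g⁻¹ }
  map_one' := by
    ext y
    obtain ⟨x, rfl⟩ := hπ.surjective y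
    simp [descendMap_apply _ _ hρ]
  map_mul' g h := by
    ext y
    obtain ⟨x, rfl⟩ := hπ.surjective y
    simp [descendMap_apply _ _ hρ]

variable (hρ : ∀ g x x', π x = π x' → π (ρ g x) = π (ρ g x'))

@[simp]
lemma descendHom_apply (g : G) (x : X) : hπ.descendHom ρ hρ g (π x) = π (ρ g x) :=
  hπ.descendMap_apply ρ hρ g x

lemma continuous_descendHom [TopologicalSpace G] (hρc : Continuous fun q : G × X => ρ q.1 q.2)
    (hπG : IsQuotientMap (Prod.map (id : G → G) π)) :
    Continuous fun q : G × Y => hπ.descendHom ρ hρ q.1 q.2 := by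
  rw [hπG.continuous_iff]
  convert hπ.continuous.comp hρc using 1
  exact funext fun q => hπ.descendHom_apply ρ hρ q.1 q.2

end

end Topology.IsQuotientMap

/-- The affine parametrisation `u ↦ (u² - 1, u (u² - 1))` of `y² = x³ + x²`, homogenised and
composed with `u = (a + b) / (a - b)`, which sends the fixed points `0, ∞` of `[a : b] ↦ [t a : b]`
to the two branches `u = ±1` through the node. -/
def nodalParam (v : ℂ × ℂ) : Fin 3 → ℂ :=
  ![4 * v.1 * v.2 * (v.1 - v.2), 4 * v.1 * v.2 * (v.1 + v.2), (v.1 - v.2) ^ 3]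

lemma continuous_nodalParam : Continuous nodalParam := by
  unfold nodalParam
  fun_prop

lemma nodalParam_smul (c : ℂ) (v : ℂ × ℂ) : nodalParam (c • v) = c ^ 3 • nodalParam v := by
  ext i
  fin_cases i <;> simp [nodalParam] <;> ring

lemma nodalParam_ne_zero {v : ℂ × ℂ} (hv : v ≠ 0) : nodalParam v ≠ 0 := by
  intro h
  have h1 : 4 * v.1 * v.2 * (v.1 + v.2) = 0 := by simpa [nodalParam] using congrFun h 1
  have h2 : (v.1 - v.2) ^ 3 = 0 := by simpa [nodalParam] using congrFun h 2
  have hdiag : v.1 = v.2 := sub_eq_zero.1 (pow_eq_zero_iff three_ne_zero |>.1 h2)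
  have hfst : v.1 = 0 := pow_eq_zero_iff three_ne_zero |>.1 <| by
    rw [← hdiag] at h1
    linear_combination h1 / 8
  exact hv (Prod.ext hfst (hdiag ▸ hfst))

lemma cubicEq_nodalParam (v : ℂ × ℂ) : cubicEq (nodalParam v) := by
  simp only [cubicEq, nodalParam, Matrix.cons_val_zero, Matrix.cons_val_one, Matrix.cons_val_two,
    Matrix.head_cons, Matrix.tail_cons]
  ring

lemma mk_nodalParam_eq_nodalP0_iff {v : ℂ × ℂ} (hv : v ≠ 0) :
    mk ℂ (nodalParam v) (nodalParam_ne_zero hv) = nodalP0 ↔ v.1 * v.2 = 0 := by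
  rw [nodalP0, mk_eq_mk_iff']
  constructor
  · rintro ⟨c, hc⟩
    have h0 : 4 * v.1 * v.2 * (v.1 - v.2) = 0 := by simpa [nodalParam] using (congrFun hc 0).symm
    have h1 : 4 * v.1 * v.2 * (v.1 + v.2) = 0 := by simpa [nodalParam] using (congrFun hc 1).symm
    exact pow_eq_zero_iff two_ne_zero |>.1 <| by linear_combination v.2 * (h0 + h1) / 8
  · intro h
    have h4 : 4 * v.1 * v.2 = 0 := by rw [mul_assoc, h, mul_zero]
    refine ⟨(v.1 - v.2) ^ 3, ?_⟩
    ext i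
    fin_cases i <;> simp [nodalParam, h4]

lemma mk_nodalParam_eq_mk_nodalParam {v w : ℂ × ℂ} (hv : v ≠ 0) (hw : w ≠ 0)
    (h : mk ℂ (nodalParam v) (nodalParam_ne_zero hv) =
      mk ℂ (nodalParam w) (nodalParam_ne_zero hw)) :
    mk ℂ v hv = mk ℂ w hw ∨ (v.1 * v.2 = 0 ∧ w.1 * w.2 = 0) := by
  obtain ⟨c, hc⟩ := (mk_eq_mk_iff' ..).1 h
  have hc0 : c ≠ 0 := by
    rintro rfl
    exact nodalParam_ne_zero hv (by simpa using hc.symm)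
  have e0 : c * (4 * w.1 * w.2 * (w.1 - w.2)) = 4 * v.1 * v.2 * (v.1 - v.2) := by
    simpa [nodalParam] using congrFun hc 0
  have e1 : c * (4 * w.1 * w.2 * (w.1 + w.2)) = 4 * v.1 * v.2 * (v.1 + v.2) := by
    simpa [nodalParam] using congrFun hc 1
  have hfst : v.1 * v.2 * v.1 = c * (w.1 * w.2) * w.1 := by linear_combination -(e0 + e1) / 8
  have hsnd : v.1 * v.2 * v.2 = c * (w.1 * w.2) * w.2 := by linear_combination (e0 - e1) / 8
  have hcube : (v.1 * v.2) ^ 3 = c ^ 2 * (w.1 * w.2) ^ 3 := by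
    linear_combination (v.1 * v.2 * v.1) * hsnd + (c * (w.1 * w.2) * w.2) * hfst
  by_cases hw0 : w.1 * w.2 = 0
  · right
    exact ⟨pow_eq_zero_iff three_ne_zero |>.1 (by simp [hcube, hw0]), hw0⟩
  · left
    have hv0 : v.1 * v.2 ≠ 0 := fun hv0 => by simp_all
    rw [mk_eq_mk_iff']
    refine ⟨c * (w.1 * w.2) / (v.1 * v.2), Prod.ext ?_ ?_⟩
    · simp only [smul_eq_mul, Prod.smul_fst]
      rw [div_mul_eq_mul_div, div_eq_iff hv0]
      linear_combination -hfst
    · simp only [smul_eq_mul, Prod.smul_snd]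
      rw [div_mul_eq_mul_div, div_eq_iff hv0]
      linear_combination -hsnd

lemma exists_mk_nodalParam_eq {p : ℙ ℂ (Fin 3 → ℂ)} (hp : p ∈ nodalCubic) :
    ∃ (v : ℂ × ℂ) (hv : v ≠ 0), mk ℂ (nodalParam v) (nodalParam_ne_zero hv) = p := by
  obtain ⟨u, hu, rfl, hcub⟩ := hp
  by_cases hnode : u 0 = 0 ∧ u 1 = 0
  · have hv : ((1 : ℂ), (0 : ℂ)) ≠ 0 := fun h => one_ne_zero (congrArg Prod.fst h)
    refine ⟨_, hv, ?_⟩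
    rw [(mk_nodalParam_eq_nodalP0_iff hv).2 (mul_zero 1), nodalP0, mk_eq_mk_iff']
    refine ⟨(u 2)⁻¹, ?_⟩
    have hu2 : u 2 ≠ 0 := fun h2 => hu (by ext i; fin_cases i <;> simp [hnode, h2])
    ext i
    fin_cases i <;> simp [hnode, hu2]
  · have hv : (u 1 + u 0, u 1 - u 0) ≠ 0 := fun h => hnode <| by
      have h0 : u 1 + u 0 = 0 := congrArg Prod.fst h
      have h1 : u 1 - u 0 = 0 := congrArg Prod.snd h
      constructor
      · linear_combination (h0 - h1) / 2
      · linear_combination (h0 + h1) / 2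
    refine ⟨_, hv, (mk_eq_mk_iff' ..).2 ⟨8 * (u 1 ^ 2 - u 0 ^ 2), ?_⟩⟩
    unfold cubicEq at hcub
    ext i
    fin_cases i <;> simp [nodalParam]
    · ring
    · ring
    · linear_combination 8 * hcub

noncomputable section

def nodalNormalization (v : {v : ℂ × ℂ // v ≠ 0}) : nodalCubic :=
  ⟨mk ℂ (nodalParam v) (nodalParam_ne_zero v.2), _, _, rfl, cubicEq_nodalParam v⟩

lemma continuous_nodalNormalization : Continuous nodalNormalization :=
  (continuous_mk'.comp <|
    (continuous_nodalParam.comp continuous_subtype_val).subtype_mk _).subtype_mk _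

lemma surjective_nodalNormalization : Surjective nodalNormalization := by
  rintro ⟨p, hp⟩
  obtain ⟨v, hv, rfl⟩ := exists_mk_nodalParam_eq hp
  exact ⟨⟨v, hv⟩, rfl⟩

lemma nodalNormalization_eq_node_iff (v : {v : ℂ × ℂ // v ≠ 0}) :
    nodalNormalization v = ⟨nodalP0, nodalP0_mem⟩ ↔ v.1.1 * v.1.2 = 0 :=
  Subtype.ext_iff.trans (mk_nodalParam_eq_nodalP0_iff v.2)

lemma nodalNormalization_eq_iff {v w : {v : ℂ × ℂ // v ≠ 0}} :
    nodalNormalization v = nodalNormalization w ↔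
      mk ℂ v.1 v.2 = mk ℂ w.1 w.2 ∨ (v.1.1 * v.1.2 = 0 ∧ w.1.1 * w.1.2 = 0) := by
  refine ⟨fun h => mk_nodalParam_eq_mk_nodalParam v.2 w.2 (congrArg Subtype.val h), ?_⟩
  rintro (h | ⟨hv, hw⟩)
  · obtain ⟨c, hc⟩ := (mk_eq_mk_iff' ..).1 h
    exact Subtype.ext <| (mk_eq_mk_iff' ..).2 ⟨c ^ 3, by rw [← nodalParam_smul, hc]⟩
  · rw [(nodalNormalization_eq_node_iff v).2 hv, (nodalNormalization_eq_node_iff w).2 hw]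

lemma surjective_nodalNormalization_comp_sphere :
    Surjective fun u : Metric.sphere (0 : ℂ × ℂ) 1 =>
      nodalNormalization ⟨u, ne_zero_of_mem_unit_sphere u⟩ := by
  intro p
  obtain ⟨v, rfl⟩ := surjective_nodalNormalization p
  refine ⟨⟨((‖v.1‖ : ℂ)⁻¹ • v.1), by simpa using norm_smul_inv_norm (𝕜 := ℂ) v.2⟩, ?_⟩
  exact nodalNormalization_eq_iff.2 <| Or.inl <| (mk_eq_mk_iff' ..).2 ⟨_, rfl⟩

lemma isQuotientMap_nodalNormalization : IsQuotientMap nodalNormalization :=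
  isQuotientMap_of_surjective_comp_compactSpace continuous_nodalNormalization
    (continuous_subtype_val.subtype_mk _) surjective_nodalNormalization_comp_sphere

lemma isQuotientMap_prodMap_nodalNormalization (W : Type*) [TopologicalSpace W] :
    IsQuotientMap (Prod.map (id : W → W) nodalNormalization) :=
  isQuotientMap_prodMap_of_surjective_comp_compactSpace W continuous_nodalNormalization
    (continuous_subtype_val.subtype_mk _) surjective_nodalNormalization_comp_sphere

def scaleFst : ℂˣ →* ({v : ℂ × ℂ // v ≠ 0} ≃ₜ {v : ℂ × ℂ // v ≠ 0}) where
  toFun t := ((Homeomorph.mulLeft₀ (t : ℂ) t.ne_zero).prodCongr (Homeomorph.refl ℂ)).subtype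
    fun v => by simp [Prod.ext_iff, t.ne_zero]
  map_one' := by
    ext v <;> simp
  map_mul' t s := by
    ext v <;> simp [mul_assoc]

@[simp]
lemma coe_scaleFst_apply (t : ℂˣ) (v : {v : ℂ × ℂ // v ≠ 0}) :
    (scaleFst t v : ℂ × ℂ) = (t * v.1.1, v.1.2) :=
  rfl

lemma continuous_scaleFst :
    Continuous fun q : ℂˣ × {v : ℂ × ℂ // v ≠ 0} => scaleFst q.1 q.2 := by
  refine Continuous.subtype_mk (f := fun q : ℂˣ × {v : ℂ × ℂ // v ≠ 0} =>
    ((q.1 : ℂ) * q.2.1.1, q.2.1.2)) ?_ _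
  fun_prop

lemma nodalNormalization_scaleFst_congr (t : ℂˣ) {v w : {v : ℂ × ℂ // v ≠ 0}}
    (h : nodalNormalization v = nodalNormalization w) :
    nodalNormalization (scaleFst t v) = nodalNormalization (scaleFst t w) := by
  rw [nodalNormalization_eq_iff] at h ⊢
  rcases h with h | ⟨hv, hw⟩
  · obtain ⟨c, hc⟩ := (mk_eq_mk_iff' ..).1 h
    refine Or.inl <| (mk_eq_mk_iff' ..).2 ⟨c, ?_⟩
    simp only [coe_scaleFst_apply, ← hc, Prod.smul_mk, Prod.smul_fst, Prod.smul_snd, smul_eq_mul]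
    rw [mul_left_comm]
  · exact Or.inr ⟨by simp [mul_assoc, hv], by simp [mul_assoc, hw]⟩

lemma forall_nodalNormalization_scaleFst_eq_iff (v : {v : ℂ × ℂ // v ≠ 0}) :
    (∀ t, nodalNormalization (scaleFst t v) = nodalNormalization v) ↔
      nodalNormalization v = ⟨nodalP0, nodalP0_mem⟩ := by
  rw [nodalNormalization_eq_node_iff]
  refine ⟨fun h => ?_, fun hv t => nodalNormalization_eq_iff.2 <|
    Or.inr ⟨by simp [mul_assoc, hv], hv⟩⟩
  rcases nodalNormalization_eq_iff.1 (h (Units.mk0 2 two_ne_zero)) with h2 | ⟨-, hv⟩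
  · obtain ⟨c, hc⟩ := (mk_eq_mk_iff' ..).1 h2
    have hfst : c * v.1.1 = 2 * v.1.1 := by simpa using congrArg Prod.fst hc
    have hsnd : c * v.1.2 = v.1.2 := by simpa using congrArg Prod.snd hc
    linear_combination v.1.1 * hsnd - v.1.2 * hfst
  · exact hv

end

/-- The nodal plane cubic `C = {[x:y:z] : z y² = x³ + x² z}` carries an action of the
multiplicative group `ℂˣ` by self-homeomorphisms, jointly continuous in
`(t, p) ∈ ℂˣ × C`, whose fixed-point set is exactly the node `p₀ = [0:0:1]`. -/
theorem nodalCubic_cstar_action :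
    ∃ ρ : ℂˣ →* (↥nodalCubic ≃ₜ ↥nodalCubic),
      Continuous (fun q : ℂˣ × ↥nodalCubic => ρ q.1 q.2) ∧
      {p : ↥nodalCubic | ∀ t : ℂˣ, ρ t p = p} = {⟨nodalP0, nodalP0_mem⟩} := by
  have hπ := isQuotientMap_nodalNormalization
  refine ⟨hπ.descendHom scaleFst fun t _ _ => nodalNormalization_scaleFst_congr t,
    hπ.continuous_descendHom _ _ continuous_scaleFst (isQuotientMap_prodMap_nodalNormalization _),
    ?_⟩
  ext p
  obtain ⟨v, rfl⟩ := surjective_nodalNormalization p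
  simpa using forall_nodalNormalization_scaleFst_eq_iff v
end
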